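/- Let $K_1 \subseteq \mathbb{R}^m$, $K_2 \subseteq \mathbb{R}^p$, $K_3 \subseteq \mathbb{R}^n$ be compact sets, and let $(H_\varepsilon)_{\varepsilon \in (0,1]}$ and $(K_\varepsilon)_{\varepsilon \in (0,1]}$ be moderate nets of smooth functions on $\mathbb{R}^m \times \mathbb{R}^p$ and on $\mathbb{R}^p \times \mathbb{R}^n$ respectively, with $\mathrm{supp}\, H_\varepsilon \subseteq K_1 \times K_2$ and $\mathrm{supp}\, K_\varepsilon \subseteq K_2 \times K_3$ for all $\varepsilon$. Then the net $(L_\varepsilon)$ defined by $L_\varepsilon(x,y) = \int_{K_2} H_\varepsilon(x,\xi) K_\varepsilon(\xi,y)\, \mathrm{d}\xi$ is a moderate net of smooth functions on $\mathbb{R}^m \times \mathbb{R}^n$. -/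

import Mathlib

open MeasureTheory Set Filter

noncomputable def dirDeriv {E : Type*} [NormedAddCommGroup E] [NormedSpace ℝ E]
    (v : E) (f : E → ℂ) : E → ℂ := fun x => fderiv ℝ f x v

noncomputable def itDeriv {E : Type*} [NormedAddCommGroup E] [NormedSpace ℝ E] :
    List E → (E → ℂ) → E → ℂ
  | [] => fun f => f
  | v :: vs => fun f => itDeriv vs (dirDeriv v f)

/-- The standard basis directions of the product space `ℝ^m × ℝ^n`. -/
def prodDirs (m n : ℕ) : Set ((Fin m → ℝ) × (Fin n → ℝ)) :=
  {v | (∃ i, v = (Pi.single i (1:ℝ), 0)) ∨ ∃ j, v = (0, Pi.single j (1:ℝ))}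

/-- The standard basis directions of `ℝ^d`. -/
def stdDirs (d : ℕ) : Set (Fin d → ℝ) := {v | ∃ i, v = Pi.single i (1:ℝ)}

/-- The seminorm `p_{A,l}(f)`: the sup over `x ∈ A` and over all partial derivatives
(iterated directional derivatives along basis directions from `B`) of order `≤ l`. -/
noncomputable def pSemi {E : Type*} [NormedAddCommGroup E] [NormedSpace ℝ E]
    (B A : Set E) (l : ℕ) (f : E → ℂ) : ℝ :=
  sSup {r | ∃ vs : List E, vs.length ≤ l ∧ (∀ v ∈ vs, v ∈ B) ∧ ∃ x ∈ A, r = ‖itDeriv vs f x‖}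

/-- A net `(f_ε)_{ε ∈ (0,1]}` is moderate if every seminorm grows at most
polynomially in `1/ε` as `ε → 0`. -/
def IsModerate {E : Type*} [NormedAddCommGroup E] [NormedSpace ℝ E]
    (B : Set E) (f : ℝ → E → ℂ) : Prop :=
  ∀ A : Set E, IsCompact A → ∀ l : ℕ, ∃ q : ℕ, ∃ C > (0:ℝ), ∃ ε₀ ∈ Ioc (0:ℝ) 1,
    ∀ ε ∈ Ioc (0:ℝ) 1, ε ≤ ε₀ → pSemi B A l (f ε) ≤ C * ε ^ (-(q:ℤ))

/-- A net `(f_ε)_{ε ∈ (0,1]}` is negligible if every seminorm is `O(ε^p)` for all `p`. -/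
def IsNegligible {E : Type*} [NormedAddCommGroup E] [NormedSpace ℝ E]
    (B : Set E) (f : ℝ → E → ℂ) : Prop :=
  ∀ A : Set E, IsCompact A → ∀ l : ℕ, ∀ p : ℕ, ∃ C > (0:ℝ), ∃ ε₀ ∈ Ioc (0:ℝ) 1,
    ∀ ε ∈ Ioc (0:ℝ) 1, ε ≤ ε₀ → pSemi B A l (f ε) ≤ C * ε ^ p


set_option maxHeartbeats 1000000
set_option synthInstance.maxHeartbeats 400000
set_option linter.unusedSectionVars false

section AuxDirDeriv
variable {E : Type*} [NormedAddCommGroup E] [NormedSpace ℝ E]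

lemma contDiff_dirDeriv {f : E → ℂ} (hf : ContDiff ℝ (⊤:ℕ∞) f) (v : E) :
    ContDiff ℝ (⊤:ℕ∞) (dirDeriv v f) := by
  have h1 : ContDiff ℝ (⊤:ℕ∞) (fderiv ℝ f) := hf.fderiv_right (by exact_mod_cast le_top)
  exact (ContinuousLinearMap.apply ℝ ℂ v).contDiff.comp h1

lemma contDiff_itDeriv {f : E → ℂ} (hf : ContDiff ℝ (⊤:ℕ∞) f) (vs : List E) :
    ContDiff ℝ (⊤:ℕ∞) (itDeriv vs f) := by
  induction vs generalizing f with
  | nil => exact hf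
  | cons v vs ih => exact ih (contDiff_dirDeriv hf v)

lemma dirDeriv_support (f : E → ℂ) (v : E) :
    Function.support (dirDeriv v f) ⊆ tsupport f := by
  intro x hx
  by_contra hxt
  apply hx
  have h0 : fderiv ℝ f x = fderiv ℝ (fun _ => (0:ℂ)) x :=
    (notMem_tsupport_iff_eventuallyEq.1 hxt).fderiv_eq
  simp [dirDeriv, h0]

lemma tsupport_dirDeriv (f : E → ℂ) (v : E) :
    tsupport (dirDeriv v f) ⊆ tsupport f :=
  closure_minimal (dirDeriv_support f v) isClosed_closure

lemma itDeriv_support (f : E → ℂ) (vs : List E) :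
    Function.support (itDeriv vs f) ⊆ tsupport f := by
  induction vs generalizing f with
  | nil => exact subset_closure
  | cons v vs ih => exact (ih (dirDeriv v f)).trans (tsupport_dirDeriv f v)
end AuxDirDeriv

section Master

variable {E : Type*} [NormedAddCommGroup E] [NormedSpace ℝ E]
  {p : ℕ} {W : Type*} [NormedAddCommGroup W] [NormedSpace ℝ W] [CompleteSpace W]

/-- partial fderiv in the first (E) variable. -/
noncomputable def pd (G : E × (Fin p → ℝ) → W) (w : E × (Fin p → ℝ)) :
    E →L[ℝ] W :=
  (fderiv ℝ G w).comp (ContinuousLinearMap.inl ℝ E (Fin p → ℝ))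

lemma hcs_of_subset {Φ : E × (Fin p → ℝ) → W} {G : E × (Fin p → ℝ) → W'}
    [NormedAddCommGroup W'] {_ : True}
    (hs : Function.support Φ ⊆ tsupport G) (hG : HasCompactSupport G) :
    HasCompactSupport Φ :=
  HasCompactSupport.of_support_subset_isCompact hG hs

lemma slice_hcs {Φ : E × (Fin p → ℝ) → W} (hΦ : HasCompactSupport Φ) (z : E) :
    HasCompactSupport (fun ξ => Φ (z, ξ)) := by
  apply HasCompactSupport.of_support_subset_isCompact (hΦ.image continuous_snd)
  intro ξ hξ
  exact ⟨(z, ξ), subset_closure hξ, rfl⟩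

lemma integrable_slice {Φ : E × (Fin p → ℝ) → W} (hcont : Continuous Φ)
    (hΦ : HasCompactSupport Φ) (z : E) :
    Integrable (fun ξ => Φ (z, ξ)) volume :=
  (hcont.comp (Continuous.prodMk_right z)).integrable_of_hasCompactSupport (slice_hcs hΦ z)

lemma pd_continuous {G : E × (Fin p → ℝ) → W} (hG : ContDiff ℝ (⊤:ℕ∞) G) :
    Continuous (pd G) :=
  Continuous.clm_comp (hG.fderiv_right (m := (⊤:ℕ∞)) ENat.coe_top_add_one.le).continuous continuous_const

lemma pd_support {G : E × (Fin p → ℝ) → W} :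
    Function.support (pd G) ⊆ tsupport G := by
  intro w hw
  by_contra hwt
  apply hw
  have h0 : fderiv ℝ G w = fderiv ℝ (fun _ => (0:W)) w :=
    (notMem_tsupport_iff_eventuallyEq.1 hwt).fderiv_eq
  simp [pd, h0]

lemma pd_hcs {G : E × (Fin p → ℝ) → W} (hG : HasCompactSupport G) :
    HasCompactSupport (pd G) :=
  HasCompactSupport.of_support_subset_isCompact hG pd_support

lemma pd_contDiff {G : E × (Fin p → ℝ) → W} (hG : ContDiff ℝ (⊤:ℕ∞) G) :
    ContDiff ℝ (⊤:ℕ∞) (pd G) := by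
  have h1 : ContDiff ℝ (⊤:ℕ∞) (fderiv ℝ G) := hG.fderiv_right (m := (⊤:ℕ∞)) ENat.coe_top_add_one.le
  exact (((ContinuousLinearMap.compL ℝ E (E × (Fin p → ℝ)) W).flip
    (ContinuousLinearMap.inl ℝ E (Fin p → ℝ))).contDiff).comp h1

lemma hasFDerivAt_int {G : E × (Fin p → ℝ) → W} (hG : ContDiff ℝ (⊤:ℕ∞) G)
    (hsupp : HasCompactSupport G) (z₀ : E) :
    HasFDerivAt (fun z => ∫ ξ, G (z, ξ)) (∫ ξ, pd G (z₀, ξ)) z₀ := by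
  obtain ⟨C, hC⟩ := ((hG.fderiv_right (m := (⊤:ℕ∞)) ENat.coe_top_add_one.le).continuous).bounded_above_of_compact_support (hsupp.fderiv ℝ)
  set K₂ : Set (Fin p → ℝ) := Prod.snd '' tsupport G with hK₂
  have hK₂c : IsCompact K₂ := hsupp.image continuous_snd
  apply hasFDerivAt_integral_of_dominated_of_fderiv_le
    (F' := fun z ξ => pd G (z, ξ)) (bound := K₂.indicator fun _ => max C 0)
    (s := Metric.ball z₀ 1) (Metric.ball_mem_nhds z₀ one_pos)
  · exact Eventually.of_forall fun z =>
      ((hG.continuous.comp (Continuous.prodMk_right z)).aestronglyMeasurable)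
  · exact integrable_slice hG.continuous hsupp z₀
  · exact ((pd_continuous hG).comp (Continuous.prodMk_right z₀)).aestronglyMeasurable
  · apply Eventually.of_forall
    intro ξ z hz
    by_cases hξ : ξ ∈ K₂
    · rw [Set.indicator_of_mem hξ]
      apply ContinuousLinearMap.opNorm_le_bound _ (le_max_right _ _)
      intro u
      calc ‖pd G (z, ξ) u‖ = ‖fderiv ℝ G (z, ξ) (u, 0)‖ := rfl
        _ ≤ ‖fderiv ℝ G (z, ξ)‖ * ‖((u, 0) : E × (Fin p → ℝ))‖ :=
            ContinuousLinearMap.le_opNorm _ _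
        _ ≤ max C 0 * ‖u‖ := by
            apply mul_le_mul ((hC _).trans (le_max_left _ _))
            · simp [Prod.norm_def]
            · positivity
            · positivity
    · rw [Set.indicator_of_notMem hξ]
      have hwt : (z, ξ) ∉ tsupport G := fun hmem => hξ ⟨(z, ξ), hmem, rfl⟩
      have : pd G (z, ξ) = 0 := by
        by_contra h
        exact hwt (pd_support (Function.mem_support.2 h))
      simp [this]
  · rw [integrable_indicator_iff hK₂c.isClosed.measurableSet]
    exact integrableOn_const hK₂c.measure_lt_top.ne
  · apply Eventually.of_forall
    intro ξ z hz
    have hd := (hG.differentiable (by simp) (z, ξ)).hasFDerivAt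
    have hcomp := hd.comp (f := fun z' : E => (z', ξ)) z ((hasFDerivAt_id z).prodMk (hasFDerivAt_const ξ z))
    exact hcomp

lemma fderiv_int {G : E × (Fin p → ℝ) → W} (hG : ContDiff ℝ (⊤:ℕ∞) G)
    (hsupp : HasCompactSupport G) (z : E) :
    fderiv ℝ (fun z => ∫ ξ, G (z, ξ)) z = ∫ ξ, pd G (z, ξ) :=
  (hasFDerivAt_int hG hsupp z).fderiv

end Master

open ContDiff in
lemma contDiff_nat_int {E : Type} [NormedAddCommGroup E] [NormedSpace ℝ E] {p : ℕ} :
    ∀ (n : ℕ) {W : Type} [NormedAddCommGroup W] [NormedSpace ℝ W] [CompleteSpace W]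
    (G : E × (Fin p → ℝ) → W), ContDiff ℝ (⊤:ℕ∞) G → HasCompactSupport G →
    ContDiff ℝ (n : ℕ) (fun z => ∫ ξ, G (z, ξ)) := by
  intro n
  induction n with
  | zero =>
    intro W _ _ _ G hG hsupp
    rw [show ((0:ℕ) : WithTop ℕ∞) = 0 by norm_cast]
    have hdiff : Differentiable ℝ (fun z => ∫ ξ, G (z, ξ)) :=
      fun z => (hasFDerivAt_int hG hsupp z).differentiableAt
    exact contDiff_zero.2 hdiff.continuous
  | succ n ih =>
    intro W _ _ _ G hG hsupp
    rw [show (((n+1:ℕ)) : WithTop ℕ∞) = (n : WithTop ℕ∞) + 1 by push_cast; ring,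
      contDiff_succ_iff_fderiv]
    refine ⟨fun z => (hasFDerivAt_int hG hsupp z).differentiableAt, by simp, ?_⟩
    have : fderiv ℝ (fun z => ∫ ξ, G (z, ξ)) = fun z => ∫ ξ, pd G (z, ξ) :=
      funext fun z => fderiv_int hG hsupp z
    rw [this]
    exact ih (pd G) (pd_contDiff hG) (pd_hcs hsupp)

lemma contDiff_int {E : Type} [NormedAddCommGroup E] [NormedSpace ℝ E] {p : ℕ}
    {W : Type} [NormedAddCommGroup W] [NormedSpace ℝ W] [CompleteSpace W]
    {G : E × (Fin p → ℝ) → W} (hG : ContDiff ℝ (⊤:ℕ∞) G) (hsupp : HasCompactSupport G) :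
    ContDiff ℝ (⊤:ℕ∞) (fun z => ∫ ξ, G (z, ξ)) :=
  contDiff_infty.2 fun n => contDiff_nat_int n G hG hsupp

section Swap
variable {E : Type} [NormedAddCommGroup E] [NormedSpace ℝ E] {p : ℕ}

lemma dirDeriv_pair_eq {G : E × (Fin p → ℝ) → ℂ} (v : E) (w : E × (Fin p → ℝ)) :
    dirDeriv ((v, 0) : E × (Fin p → ℝ)) G w = pd G w v := by
  simp [dirDeriv, pd]

lemma dirDeriv_pair_contDiff {G : E × (Fin p → ℝ) → ℂ} (hG : ContDiff ℝ (⊤:ℕ∞) G) (v : E) :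
    ContDiff ℝ (⊤:ℕ∞) (dirDeriv ((v, 0) : E × (Fin p → ℝ)) G) :=
  contDiff_dirDeriv hG _

lemma dirDeriv_pair_hcs {G : E × (Fin p → ℝ) → ℂ} (hG : HasCompactSupport G)
    (u : E × (Fin p → ℝ)) : HasCompactSupport (dirDeriv u G) :=
  HasCompactSupport.of_support_subset_isCompact hG (dirDeriv_support G u)

lemma dirDeriv_int {G : E × (Fin p → ℝ) → ℂ} (hG : ContDiff ℝ (⊤:ℕ∞) G)
    (hsupp : HasCompactSupport G) (v : E) :
    dirDeriv v (fun z => ∫ ξ, G (z, ξ)) =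
      fun z => ∫ ξ, dirDeriv ((v, 0) : E × (Fin p → ℝ)) G (z, ξ) := by
  funext z
  have h1 : dirDeriv v (fun z => ∫ ξ, G (z, ξ)) z = (∫ ξ, pd G (z, ξ)) v := by
    rw [dirDeriv, fderiv_int hG hsupp z]
  rw [h1, ContinuousLinearMap.integral_apply
    (integrable_slice (pd_continuous hG) (pd_hcs hsupp) z)]
  exact integral_congr_ae (Eventually.of_forall fun ξ => (dirDeriv_pair_eq v (z, ξ)).symm)

lemma itDeriv_int {G : E × (Fin p → ℝ) → ℂ} (hG : ContDiff ℝ (⊤:ℕ∞) G)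
    (hsupp : HasCompactSupport G) (vs : List E) :
    itDeriv vs (fun z => ∫ ξ, G (z, ξ)) =
      fun z => ∫ ξ, itDeriv (vs.map (fun v => ((v, 0) : E × (Fin p → ℝ)))) G (z, ξ) := by
  induction vs generalizing G with
  | nil => rfl
  | cons v vs ih =>
    show itDeriv vs (dirDeriv v (fun z => ∫ ξ, G (z, ξ))) = _
    rw [dirDeriv_int hG hsupp v,
      ih (dirDeriv_pair_contDiff hG v) (dirDeriv_pair_hcs hsupp _)]
    rfl

end Swap

section Split
variable {m p n : ℕ}

local notation "Rm" => (Fin m → ℝ)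
local notation "Rp" => (Fin p → ℝ)
local notation "Rn" => (Fin n → ℝ)

lemma dirDeriv_kernel (h : Rm × Rp → ℂ) (k : Rp × Rn → ℂ)
    (hh : ContDiff ℝ (⊤:ℕ∞) h) (hk : ContDiff ℝ (⊤:ℕ∞) k) (v : Rm × Rn) :
    dirDeriv ((v, 0) : (Rm × Rn) × Rp) (fun w => h (w.1.1, w.2) * k (w.2, w.1.2)) =
      fun w => dirDeriv ((v.1, 0) : Rm × Rp) h (w.1.1, w.2) * k (w.2, w.1.2) +
        h (w.1.1, w.2) * dirDeriv ((0, v.2) : Rp × Rn) k (w.2, w.1.2) := by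
  funext w
  set e₁ : ((Rm × Rn) × Rp) →L[ℝ] Rm × Rp :=
    ((ContinuousLinearMap.fst ℝ Rm Rn).comp
      (ContinuousLinearMap.fst ℝ (Rm × Rn) Rp)).prod
      (ContinuousLinearMap.snd ℝ (Rm × Rn) Rp) with he₁
  set e₂ : ((Rm × Rn) × Rp) →L[ℝ] Rp × Rn :=
    (ContinuousLinearMap.snd ℝ (Rm × Rn) Rp).prod
      ((ContinuousLinearMap.snd ℝ Rm Rn).comp
        (ContinuousLinearMap.fst ℝ (Rm × Rn) Rp)) with he₂
  have Hc : HasFDerivAt (fun w : (Rm × Rn) × Rp => h (w.1.1, w.2))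
      ((fderiv ℝ h (w.1.1, w.2)).comp e₁) w :=
    HasFDerivAt.comp w
      ((hh.differentiable (by simp) (w.1.1, w.2)).hasFDerivAt)
      e₁.hasFDerivAt
  have Hd : HasFDerivAt (fun w : (Rm × Rn) × Rp => k (w.2, w.1.2))
      ((fderiv ℝ k (w.2, w.1.2)).comp e₂) w :=
    HasFDerivAt.comp w
      ((hk.differentiable (by simp) (w.2, w.1.2)).hasFDerivAt)
      e₂.hasFDerivAt
  have Hmul := Hc.mul Hd
  rw [dirDeriv, show (fun w : (Rm × Rn) × Rp => h (w.1.1, w.2) * k (w.2, w.1.2)) =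
    ((fun w => h (w.1.1, w.2)) * fun w => k (w.2, w.1.2)) from rfl, Hmul.fderiv]
  have h1 : e₁ ((v, 0) : (Rm × Rn) × Rp) = (v.1, 0) := by simp [he₁]
  have h2 : e₂ ((v, 0) : (Rm × Rn) × Rp) = (0, v.2) := by simp [he₂]
  simp only [ContinuousLinearMap.add_apply, ContinuousLinearMap.smul_apply,
    ContinuousLinearMap.comp_apply, h1, h2, smul_eq_mul, dirDeriv]
  ring

lemma dirDeriv_kernel_left (h : Rm × Rp → ℂ) (k : Rp × Rn → ℂ)
    (hh : ContDiff ℝ (⊤:ℕ∞) h) (hk : ContDiff ℝ (⊤:ℕ∞) k) (a : Fin m → ℝ) :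
    dirDeriv (((a, 0), 0) : (Rm × Rn) × Rp) (fun w => h (w.1.1, w.2) * k (w.2, w.1.2)) =
      fun w => dirDeriv ((a, 0) : Rm × Rp) h (w.1.1, w.2) * k (w.2, w.1.2) := by
  rw [dirDeriv_kernel h k hh hk (a, 0)]
  funext w
  have h0 : dirDeriv ((0, (0:Fin n → ℝ)) : Rp × Rn) k (w.2, w.1.2) = 0 := by
    rw [dirDeriv, Prod.mk_zero_zero, map_zero]
  rw [h0, mul_zero, add_zero]

lemma dirDeriv_kernel_right (h : Rm × Rp → ℂ) (k : Rp × Rn → ℂ)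
    (hh : ContDiff ℝ (⊤:ℕ∞) h) (hk : ContDiff ℝ (⊤:ℕ∞) k) (b : Fin n → ℝ) :
    dirDeriv (((0, b), 0) : (Rm × Rn) × Rp) (fun w => h (w.1.1, w.2) * k (w.2, w.1.2)) =
      fun w => h (w.1.1, w.2) * dirDeriv ((0, b) : Rp × Rn) k (w.2, w.1.2) := by
  rw [dirDeriv_kernel h k hh hk (0, b)]
  funext w
  have h0 : dirDeriv (((0:Fin m → ℝ), (0:Fin p → ℝ)) : Rm × Rp) h (w.1.1, w.2) = 0 := by
    rw [dirDeriv, Prod.mk_zero_zero, map_zero]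
  rw [h0, zero_mul, zero_add]

lemma itDeriv_kernel_split :
    ∀ (vs : List (Rm × Rn)), (∀ v ∈ vs, v ∈ prodDirs m n) →
    ∀ (h : Rm × Rp → ℂ) (k : Rp × Rn → ℂ),
      ContDiff ℝ (⊤:ℕ∞) h → ContDiff ℝ (⊤:ℕ∞) k →
    ∃ hs : List (Rm × Rp), ∃ ks : List (Rp × Rn),
      hs.length + ks.length = vs.length ∧
      (∀ u ∈ hs, u ∈ prodDirs m p) ∧ (∀ u ∈ ks, u ∈ prodDirs p n) ∧
      ∀ w : (Rm × Rn) × Rp,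
        itDeriv (vs.map (fun v => ((v, 0) : (Rm × Rn) × Rp)))
          (fun w => h (w.1.1, w.2) * k (w.2, w.1.2)) w =
        itDeriv hs h (w.1.1, w.2) * itDeriv ks k (w.2, w.1.2) := by
  intro vs
  induction vs with
  | nil =>
    intro _ h k hh hk
    exact ⟨[], [], rfl, by simp, by simp, fun w => rfl⟩
  | cons v vs ih =>
    intro hdirs h k hh hk
    have hv := hdirs v List.mem_cons_self
    rcases hv with ⟨i, rfl⟩ | ⟨j, rfl⟩
    · -- x-direction
      have hstep := dirDeriv_kernel_left h k hh hk (Pi.single i 1)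
      have hh' : ContDiff ℝ (⊤:ℕ∞) (dirDeriv ((Pi.single i 1, 0) : Rm × Rp) h) :=
        contDiff_dirDeriv hh _
      obtain ⟨hs, ks, hlen, hhs, hks, heq⟩ :=
        ih (fun u hu => hdirs u (List.mem_cons_of_mem _ hu))
          (dirDeriv ((Pi.single i 1, 0) : Rm × Rp) h) k hh' hk
      refine ⟨(Pi.single i 1, 0) :: hs, ks, by simp [← hlen]; ring, ?_, hks, ?_⟩
      · intro u hu
        rcases List.mem_cons.1 hu with rfl | hu
        · exact Or.inl ⟨i, rfl⟩
        · exact hhs u hu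
      · intro w
        show itDeriv (vs.map _) (dirDeriv _ _) w = _
        rw [hstep]
        exact heq w
    · -- y-direction
      have hstep := dirDeriv_kernel_right h k hh hk (Pi.single j 1)
      have hk' : ContDiff ℝ (⊤:ℕ∞) (dirDeriv ((0, Pi.single j 1) : Rp × Rn) k) :=
        contDiff_dirDeriv hk _
      obtain ⟨hs, ks, hlen, hhs, hks, heq⟩ :=
        ih (fun u hu => hdirs u (List.mem_cons_of_mem _ hu))
          h (dirDeriv ((0, Pi.single j 1) : Rp × Rn) k) hh hk'
      refine ⟨hs, (0, Pi.single j 1) :: ks, by simp [← hlen]; ring, hhs, ?_, ?_⟩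
      · intro u hu
        rcases List.mem_cons.1 hu with rfl | hu
        · exact Or.inr ⟨j, rfl⟩
        · exact hks u hu
      · intro w
        show itDeriv (vs.map _) (dirDeriv _ _) w = _
        rw [hstep]
        exact heq w

end Split

lemma finite_lists {α : Type*} {s : Set α} (hs : s.Finite) :
    ∀ l : ℕ, {vs : List α | vs.length ≤ l ∧ ∀ v ∈ vs, v ∈ s}.Finite := by
  intro l
  induction l with
  | zero =>
    apply Set.Finite.subset (Set.finite_singleton ([] : List α))
    rintro vs ⟨h1, -⟩
    simpa [List.length_eq_zero_iff] using Nat.le_zero.1 h1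
  | succ l ih =>
    apply Set.Finite.subset ((Set.finite_singleton ([] : List α)).union
      (Set.Finite.image2 List.cons hs ih))
    rintro vs ⟨h1, h2⟩
    cases vs with
    | nil => exact Or.inl rfl
    | cons v tl =>
      refine Or.inr (Set.mem_image2_of_mem (h2 v List.mem_cons_self) ?_)
      exact ⟨Nat.le_of_succ_le_succ h1, fun u hu => h2 u (List.mem_cons_of_mem _ hu)⟩

lemma prodDirs_finite (m n : ℕ) : (prodDirs m n).Finite := by
  have : prodDirs m n =
      (Set.range fun i : Fin m => ((Pi.single i (1:ℝ), 0) : (Fin m → ℝ) × (Fin n → ℝ))) ∪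
      (Set.range fun j : Fin n => ((0, Pi.single j (1:ℝ)) : (Fin m → ℝ) × (Fin n → ℝ))) := by
    ext v
    simp [prodDirs, Set.mem_range, eq_comm]
  rw [this]
  exact (Set.finite_range _).union (Set.finite_range _)

lemma pSemi_set_bddAbove {E : Type*} [NormedAddCommGroup E] [NormedSpace ℝ E]
    {B A : Set E} (hB : B.Finite) (hA : IsCompact A) (l : ℕ) {f : E → ℂ}
    (hf : ContDiff ℝ (⊤:ℕ∞) f) :
    BddAbove {r | ∃ vs : List E, vs.length ≤ l ∧ (∀ v ∈ vs, v ∈ B) ∧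
      ∃ x ∈ A, r = ‖itDeriv vs f x‖} := by
  have hT := finite_lists hB l
  have heq : {r | ∃ vs : List E, vs.length ≤ l ∧ (∀ v ∈ vs, v ∈ B) ∧
      ∃ x ∈ A, r = ‖itDeriv vs f x‖} =
      ⋃ vs ∈ {vs : List E | vs.length ≤ l ∧ ∀ v ∈ vs, v ∈ B},
        (fun x => ‖itDeriv vs f x‖) '' A := by
    ext r
    simp only [Set.mem_iUnion, Set.mem_image, Set.mem_setOf_eq]
    constructor
    · rintro ⟨vs, h1, h2, x, hx, rfl⟩
      exact ⟨vs, ⟨h1, h2⟩, x, hx, rfl⟩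
    · rintro ⟨vs, ⟨h1, h2⟩, x, hx, rfl⟩
      exact ⟨vs, h1, h2, x, hx, rfl⟩
  rw [heq]
  rw [Set.Finite.bddAbove_biUnion hT]
  intro vs _
  exact hA.bddAbove_image ((contDiff_itDeriv hf vs).continuous.norm.continuousOn)

lemma le_pSemi {E : Type*} [NormedAddCommGroup E] [NormedSpace ℝ E]
    {B A : Set E} (hB : B.Finite) (hA : IsCompact A) (l : ℕ) {f : E → ℂ}
    (hf : ContDiff ℝ (⊤:ℕ∞) f) {vs : List E} (h1 : vs.length ≤ l)
    (h2 : ∀ v ∈ vs, v ∈ B) {x : E} (hx : x ∈ A) :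
    ‖itDeriv vs f x‖ ≤ pSemi B A l f :=
  le_csSup (pSemi_set_bddAbove hB hA l hf) ⟨vs, h1, h2, x, hx, rfl⟩

/-- The composition of two moderate nets of compactly supported smooth kernels is a
moderate net of smooth kernels. -/
theorem composed_net_of_kernels_is_moderate
    {m p n : ℕ} (S₁ : Set (Fin m → ℝ)) (S₂ : Set (Fin p → ℝ)) (S₃ : Set (Fin n → ℝ))
    (hS₁ : IsCompact S₁) (hS₂ : IsCompact S₂) (hS₃ : IsCompact S₃)
    (H : ℝ → (Fin m → ℝ) × (Fin p → ℝ) → ℂ)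
    (hHsm : ∀ ε ∈ Ioc (0:ℝ) 1, ContDiff ℝ (⊤:ℕ∞) (H ε))
    (hHsupp : ∀ ε ∈ Ioc (0:ℝ) 1, Function.support (H ε) ⊆ S₁ ×ˢ S₂)
    (hHmod : IsModerate (prodDirs m p) H)
    (K : ℝ → (Fin p → ℝ) × (Fin n → ℝ) → ℂ)
    (hKsm : ∀ ε ∈ Ioc (0:ℝ) 1, ContDiff ℝ (⊤:ℕ∞) (K ε))
    (hKsupp : ∀ ε ∈ Ioc (0:ℝ) 1, Function.support (K ε) ⊆ S₂ ×ˢ S₃)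
    (hKmod : IsModerate (prodDirs p n) K)
    (L : ℝ → (Fin m → ℝ) × (Fin n → ℝ) → ℂ)
    (hL : ∀ ε x y, L ε (x, y) = ∫ ξ in S₂, H ε (x, ξ) * K ε (ξ, y)) :
    (∀ ε ∈ Ioc (0:ℝ) 1, ContDiff ℝ (⊤:ℕ∞) (L ε)) ∧ IsModerate (prodDirs m n) L := by
  -- the combined kernel
  set G : ℝ → ((Fin m → ℝ) × (Fin n → ℝ)) × (Fin p → ℝ) → ℂ :=
    fun ε w => H ε (w.1.1, w.2) * K ε (w.2, w.1.2) with hGdef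
  have hGsm : ∀ ε ∈ Ioc (0:ℝ) 1, ContDiff ℝ (⊤:ℕ∞) (G ε) := by
    intro ε hε
    have c1 : ContDiff ℝ (⊤:ℕ∞)
        (fun w : ((Fin m → ℝ) × (Fin n → ℝ)) × (Fin p → ℝ) => (w.1.1, w.2)) :=
      (contDiff_fst.comp contDiff_fst).prodMk contDiff_snd
    have c2 : ContDiff ℝ (⊤:ℕ∞)
        (fun w : ((Fin m → ℝ) × (Fin n → ℝ)) × (Fin p → ℝ) => (w.2, w.1.2)) :=
      contDiff_snd.prodMk (contDiff_snd.comp contDiff_fst)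
    exact ((hHsm ε hε).comp c1).mul ((hKsm ε hε).comp c2)
  have hGsupp : ∀ ε ∈ Ioc (0:ℝ) 1, HasCompactSupport (G ε) := by
    intro ε hε
    apply HasCompactSupport.of_support_subset_isCompact ((hS₁.prod hS₃).prod hS₂)
    intro w hw
    have hne : H ε (w.1.1, w.2) ≠ 0 ∧ K ε (w.2, w.1.2) ≠ 0 := by
      constructor <;> intro h0 <;> apply hw <;> simp [hGdef, h0]
    have h1 := hHsupp ε hε (Function.mem_support.2 hne.1)
    have h2 := hKsupp ε hε (Function.mem_support.2 hne.2)
    exact ⟨⟨h1.1, h2.2⟩, h1.2⟩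
  have hLfun : ∀ ε ∈ Ioc (0:ℝ) 1, L ε = fun z => ∫ ξ, G ε (z, ξ) := by
    intro ε hε
    funext z
    have h1 : L ε z = ∫ ξ in S₂, H ε (z.1, ξ) * K ε (ξ, z.2) := by
      rw [← hL ε z.1 z.2]
    rw [h1]
    apply setIntegral_eq_integral_of_forall_compl_eq_zero
    intro ξ hξ
    have hH0 : H ε (z.1, ξ) = 0 := by
      by_contra h0
      exact hξ (hHsupp ε hε (Function.mem_support.2 h0)).2
    rw [hH0, zero_mul]
  constructor
  · intro ε hε
    rw [hLfun ε hε]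
    exact contDiff_int (hGsm ε hε) (hGsupp ε hε)
  · intro A hA l
    have hA₁ : IsCompact ((Prod.fst '' A) ×ˢ S₂) := (hA.image continuous_fst).prod hS₂
    have hA₂ : IsCompact (S₂ ×ˢ (Prod.snd '' A)) := hS₂.prod (hA.image continuous_snd)
    obtain ⟨q₁, C₁, hC₁, ε₁, hε₁, hH1⟩ := hHmod ((Prod.fst '' A) ×ˢ S₂) hA₁ l
    obtain ⟨q₂, C₂, hC₂, ε₂, hε₂, hK1⟩ := hKmod (S₂ ×ˢ (Prod.snd '' A)) hA₂ l
    refine ⟨q₁ + q₂, ((volume S₂).toReal + 1) * (C₁ * C₂), by positivity, min ε₁ ε₂,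
      ⟨lt_min hε₁.1 hε₂.1, (min_le_left _ _).trans hε₁.2⟩, ?_⟩
    intro ε hε hεle
    have hε0 : 0 < ε := hε.1
    have hpow : (0:ℝ) < ε ^ (-((q₁ + q₂ : ℕ) : ℤ)) := zpow_pos hε0 _
    have hRHS : (0:ℝ) ≤ ((volume S₂).toReal + 1) * (C₁ * C₂) * ε ^ (-((q₁ + q₂ : ℕ) : ℤ)) := by
      have h0 : (0:ℝ) < (volume S₂).toReal + 1 := by positivity
      exact le_of_lt (mul_pos (mul_pos h0 (mul_pos hC₁ hC₂)) hpow)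
    apply Real.sSup_le _ hRHS
    rintro r ⟨vs, hlen, hdirs, z, hzA, rfl⟩
    rw [hLfun ε hε, itDeriv_int (hGsm ε hε) (hGsupp ε hε) vs]
    obtain ⟨hs, ks, hlensum, hhs, hks, heq⟩ :=
      itDeriv_kernel_split vs hdirs (H ε) (K ε) (hHsm ε hε) (hKsm ε hε)
    have hzero : ∀ ξ ∉ S₂, itDeriv hs (H ε) (z.1, ξ) * itDeriv ks (K ε) (ξ, z.2) = 0 := by
      intro ξ hξ
      have hH0 : itDeriv hs (H ε) (z.1, ξ) = 0 := by
        by_contra h0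
        have hmem := itDeriv_support (H ε) hs (Function.mem_support.2 h0)
        have hcl : tsupport (H ε) ⊆ S₁ ×ˢ S₂ :=
          closure_minimal (hHsupp ε hε) (hS₁.prod hS₂).isClosed
        exact hξ (hcl hmem).2
      rw [hH0, zero_mul]
    have hint : (∫ ξ, itDeriv (vs.map (fun v => ((v, 0) :
          ((Fin m → ℝ) × (Fin n → ℝ)) × (Fin p → ℝ)))) (G ε) (z, ξ)) =
        ∫ ξ in S₂, itDeriv hs (H ε) (z.1, ξ) * itDeriv ks (K ε) (ξ, z.2) := by
      rw [integral_congr_ae (Eventually.of_forall fun ξ => heq (z, ξ))]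
      exact (setIntegral_eq_integral_of_forall_compl_eq_zero hzero).symm
    show ‖(∫ ξ, itDeriv (vs.map (fun v => ((v, 0) :
        ((Fin m → ℝ) × (Fin n → ℝ)) × (Fin p → ℝ)))) (G ε) (z, ξ))‖ ≤ _
    rw [hint]
    have hPH : pSemi (prodDirs m p) ((Prod.fst '' A) ×ˢ S₂) l (H ε) ≤ C₁ * ε ^ (-(q₁:ℤ)) :=
      hH1 ε hε (hεle.trans (min_le_left _ _))
    have hPK : pSemi (prodDirs p n) (S₂ ×ˢ (Prod.snd '' A)) l (K ε) ≤ C₂ * ε ^ (-(q₂:ℤ)) :=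
      hK1 ε hε (hεle.trans (min_le_right _ _))
    have hbound : ∀ ξ ∈ S₂, ‖itDeriv hs (H ε) (z.1, ξ) * itDeriv ks (K ε) (ξ, z.2)‖ ≤
        (C₁ * ε ^ (-(q₁:ℤ))) * (C₂ * ε ^ (-(q₂:ℤ))) := by
      intro ξ hξ
      rw [norm_mul]
      have ha : ‖itDeriv hs (H ε) (z.1, ξ)‖ ≤ pSemi (prodDirs m p) ((Prod.fst '' A) ×ˢ S₂) l (H ε) :=
        le_pSemi (prodDirs_finite m p) hA₁ l (hHsm ε hε)
          (le_trans (Nat.le.intro hlensum) hlen) hhs ⟨⟨z, hzA, rfl⟩, hξ⟩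
      have hb : ‖itDeriv ks (K ε) (ξ, z.2)‖ ≤ pSemi (prodDirs p n) (S₂ ×ˢ (Prod.snd '' A)) l (K ε) :=
        le_pSemi (prodDirs_finite p n) hA₂ l (hKsm ε hε)
          (le_trans (Nat.le.intro (by omega : ks.length + hs.length = vs.length)) hlen)
          hks ⟨hξ, ⟨z, hzA, rfl⟩⟩
      exact mul_le_mul (ha.trans hPH) (hb.trans hPK) (norm_nonneg _)
        ((norm_nonneg _).trans (ha.trans hPH))
    have hmeas : AEStronglyMeasurable
        (fun ξ => itDeriv hs (H ε) (z.1, ξ) * itDeriv ks (K ε) (ξ, z.2))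
        (volume.restrict S₂) := by
      apply Continuous.aestronglyMeasurable
      exact ((contDiff_itDeriv (hHsm ε hε) hs).continuous.comp
          (Continuous.prodMk_right z.1)).mul
        ((contDiff_itDeriv (hKsm ε hε) ks).continuous.comp
          (continuous_id.prodMk continuous_const))
    have hest := norm_setIntegral_le_of_norm_le_const (μ := volume)
      hS₂.measure_lt_top hbound
    rw [measureReal_def] at hest
    refine hest.trans ?_
    have hzpow : ε ^ (-((q₁ + q₂ : ℕ):ℤ)) = ε ^ (-(q₁:ℤ)) * ε ^ (-(q₂:ℤ)) := by
      rw [← zpow_add₀ (ne_of_gt hε0)]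
      congr 1
      push_cast
      ring
    rw [hzpow]
    have h2a : (0:ℝ) < ε ^ (-(q₁:ℤ)) := zpow_pos hε0 _
    have h2b : (0:ℝ) < ε ^ (-(q₂:ℤ)) := zpow_pos hε0 _
    have hvol : (0:ℝ) ≤ (volume S₂).toReal := ENNReal.toReal_nonneg
    nlinarith [mul_pos (mul_pos hC₁ h2a) (mul_pos hC₂ h2b)]
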